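/- arXiv:1111.0017 — 3 statements merged into one kernel-verified Lean document; each statement's English description precedes it below -/
import Mathlib

section
/- Let R be a commutative ring, d a natural number, λ₁,…,λ_d ∈ R, and f = a₀ + a₁X + a₂X² + ⋯ ∈ R[[X]]. With C := ∏_{i=1}^d (1 − λᵢX) and C′ its formal derivative, one has ∑_{i=1}^d f(λᵢX) = d·a₀ + f ⊙ (−X·C′·C⁻¹), where f(λX) denotes the rescaled series ∑ₙ aₙλⁿXⁿ and ⊙ denotes the Hadamard product. -/
open PowerSeries

/-- The Hadamard product of two formal power series:
`(∑ aₙ Xⁿ) ⊙ (∑ bₙ Xⁿ) := ∑ aₙ bₙ Xⁿ`. -/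
noncomputable def hadamard {R : Type*} [CommRing R] (f g : PowerSeries R) : PowerSeries R :=
  PowerSeries.mk fun n => PowerSeries.coeff n f * PowerSeries.coeff n g

/-!
Each factor `1 - λX` of `C` has inverse the geometric series `G_λ = ∑ λⁿ Xⁿ`, so the logarithmic
derivative gives `-X C' C⁻¹ = ∑ᵢ λᵢ X G_{λᵢ} = ∑ᵢ (G_{λᵢ} - 1)`. Since `f ⊙ G_λ = f(λX)`
and `f ⊙ 1 = a₀`, taking the Hadamard product with `f` yields `∑ᵢ f(λᵢX) - d a₀`.
-/

theorem Derivation.map_prod_mul_prod_of_mul_eq_one {R A ι : Type*} [CommSemiring R]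
    [CommRing A] [Algebra R A] (D : Derivation R A A) (s : Finset ι) (g h : ι → A)
    (hgh : ∀ i ∈ s, g i * h i = 1) :
    D (∏ i ∈ s, g i) * ∏ i ∈ s, h i = ∑ i ∈ s, D (g i) * h i := by
  classical
  induction s using Finset.induction_on with
  | empty => simp
  | insert a s ha ih =>
    have hgh_s : ∀ i ∈ s, g i * h i = 1 := fun i hi => hgh i (Finset.mem_insert_of_mem hi)
    have hprod : (∏ i ∈ s, g i) * ∏ i ∈ s, h i = 1 := by
      rw [← Finset.prod_mul_distrib, Finset.prod_congr rfl hgh_s, Finset.prod_const_one]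
    rw [Finset.prod_insert ha, Finset.prod_insert ha, Finset.sum_insert ha, Derivation.leibniz,
      ← ih hgh_s, smul_eq_mul, smul_eq_mul]
    linear_combination (D (∏ i ∈ s, g i) * ∏ i ∈ s, h i) * hgh a (Finset.mem_insert_self a s) +
      D (g a) * h a * hprod

namespace PowerSeries

variable {R : Type*} [CommRing R]

theorem rescale_mk_one_mul_one_sub_C_mul_X (a : R) : rescale a (mk 1) * (1 - C a * X) = 1 := by
  simpa [rescale_X] using congrArg (rescale a) (mk_one_mul_one_sub_eq_one R)

theorem neg_X_mul_derivative_one_sub_C_mul_X_mul_rescale_mk_one (a : R) :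
    -X * d⁄dX R (1 - C a * X) * rescale a (mk 1) = rescale a (mk 1) - 1 := by
  simp only [map_sub, Derivation.map_one_eq_zero, Derivation.leibniz, derivative_X,
    derivative_C, smul_eq_mul]
  linear_combination -(rescale_mk_one_mul_one_sub_C_mul_X a)

end PowerSeries

section Hadamard

variable {R : Type*} [CommRing R]

theorem hadamard_sum_right {ι : Type*} (f : R⟦X⟧) (s : Finset ι) (g : ι → R⟦X⟧) :
    hadamard f (∑ i ∈ s, g i) = ∑ i ∈ s, hadamard f (g i) := by
  ext n
  simp [hadamard, Finset.mul_sum]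

theorem hadamard_sub_right (f g h : R⟦X⟧) :
    hadamard f (g - h) = hadamard f g - hadamard f h := by
  ext n
  simp [hadamard, mul_sub]

theorem hadamard_one_right (f : R⟦X⟧) : hadamard f 1 = C (constantCoeff f) := by
  ext n
  rcases n with _ | n <;> simp [hadamard, coeff_one, coeff_C]

theorem hadamard_rescale_mk_one (f : R⟦X⟧) (a : R) :
    hadamard f (rescale a (mk 1)) = rescale a f := by
  ext n
  simp [hadamard, coeff_rescale, mul_comm]

end Hadamard

/-- Let `R` be a commutative ring, `d : ℕ`, `λ₁, …, λ_d ∈ R` and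
`f = a₀ + a₁X + ⋯ ∈ R⟦X⟧`.  With `C := ∏ i, (1 - λᵢ X)` (a unit, with inverse `Cinv`)
and `C'` its formal derivative, one has
`∑ i, f(λᵢ X) = d • a₀ + f ⊙ (-X * C' * C⁻¹)`,
where `f(λX)` is the rescaled series `∑ aₙ λⁿ Xⁿ` and `⊙` is the Hadamard product. -/
theorem statement1 (R : Type*) [CommRing R] (d : ℕ) (lam : Fin d → R)
    (f C Cinv : PowerSeries R)
    (hC : C = ∏ i : Fin d, (1 - PowerSeries.C (lam i) * PowerSeries.X))
    (hCinv : C * Cinv = 1) :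
    ∑ i : Fin d, PowerSeries.rescale (lam i) f =
      d • PowerSeries.C (PowerSeries.constantCoeff f) +
        hadamard f (-PowerSeries.X * derivativeFun C * Cinv) := by
  have hgeom : ∀ i ∈ Finset.univ, (1 - PowerSeries.C (lam i) * X) * rescale (lam i) (mk 1) = 1 :=
    fun i _ => by rw [mul_comm, rescale_mk_one_mul_one_sub_C_mul_X]
  have hCinv_eq : Cinv = ∏ i, rescale (lam i) (mk 1) := by
    refine left_inv_eq_right_inv (by rwa [mul_comm]) ?_
    rw [hC, ← Finset.prod_mul_distrib, Finset.prod_congr rfl hgeom, Finset.prod_const_one]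
  have hlogDeriv : -X * d⁄dX R C * Cinv = ∑ i, (rescale (lam i) (mk 1) - 1) := by
    simp_rw [← neg_X_mul_derivative_one_sub_C_mul_X_mul_rescale_mk_one, mul_assoc, ← Finset.mul_sum]
    rw [← (d⁄dX R).map_prod_mul_prod_of_mul_eq_one _ _ _ hgeom, ← hC, ← hCinv_eq]
  change _ = _ + hadamard f (-X * d⁄dX R C * Cinv)
  rw [hlogDeriv, hadamard_sum_right]
  simp [hadamard_sub_right, hadamard_one_right, hadamard_rescale_mk_one, Finset.sum_sub_distrib]
end

section
/- In the ring (ℚ[U])[[y]] of formal power series in y over the polynomial ring ℚ[U], define Q := 4 − y + (1+y)(yU − 3)·(1 + yU²)⁻¹ − U(1+y)²·((1 + yU²)⁻¹)². Then the coefficient of y⁰ in Q is 1 − U, the coefficient of y¹ is 2U³ + 3U² − U − 4, and for every integer n ≥ 2 the coefficient of yⁿ is −U((n+1)U − (n−2))(U−1)(U+1)²(−U²)^{n−2}. -/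
/-!
Since `1 + y U²` is invertible, `W` is the geometric series `∑ (-U²)ⁿ yⁿ`, i.e. `1 + y + y² + ⋯`
rescaled by `-U²`, and then `W² = ∑ (n + 1)(-U²)ⁿ yⁿ`. Expanding, `Q` is a combination of
`yᵏ W` and `yᵏ W²` (`k ≤ 2`) with coefficients in `ℚ[U]`, so each coefficient of `Q` is a short
sum of shifted coefficients of `W` and `W²`.
-/

open PowerSeries

namespace PowerSeries

variable {R : Type*} [CommRing R]

theorem rescale_mk_one_mul_one_add_C_mul_X (a : R) :
    rescale (-a) (mk 1) * (1 + C a * X) = 1 := by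
  simpa [rescale_X, sub_eq_add_neg] using
    congrArg (rescale (-a)) (mk_one_mul_one_sub_eq_one (S := R))

theorem eq_rescale_mk_one_of_one_add_C_mul_X_mul_eq_one {a : R} {W : R⟦X⟧}
    (hW : (1 + C a * X) * W = 1) : W = rescale (-a) (mk 1) :=
  (left_inv_eq_right_inv (rescale_mk_one_mul_one_add_C_mul_X a) hW).symm

theorem coeff_rescale_mk_one (a : R) (n : ℕ) : coeff n (rescale a (mk 1)) = a ^ n := by
  simp

theorem coeff_rescale_mk_one_sq (a : R) (n : ℕ) :
    coeff n (rescale a (mk 1) ^ 2) = (n + 1) * a ^ n := by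
  rw [← map_pow, mk_one_pow_eq_mk_choose_add (S := R) (d := 1), coeff_rescale, coeff_mk]
  simp [add_comm, mul_comm]

end PowerSeries

section D5Series

variable {R : Type*} [CommRing R] (u : R)

/-- The series `Q` of the paper, with `W` in place of `(1 + y u²)⁻¹`. -/
noncomputable def d5Series (W : R⟦X⟧) : R⟦X⟧ :=
  4 - X + (1 + X) * (X * C u - 3) * W - C u * (1 + X) ^ 2 * W ^ 2

theorem d5Series_eq_smul (W : R⟦X⟧) :
    d5Series u W = (4 : R) • 1 - X - (3 : R) • W + (u - 3) • (X * W) + u • (X ^ 2 * W)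
      - u • W ^ 2 - (2 * u) • (X * W ^ 2) - u • (X ^ 2 * W ^ 2) := by
  simp only [d5Series, smul_eq_C_mul, map_sub, map_mul, map_ofNat]
  ring

theorem coeff_zero_d5Series : coeff 0 (d5Series u (rescale (-u ^ 2) (mk 1))) = 1 - u := by
  simp only [d5Series_eq_smul, map_add, map_sub, coeff_smul, smul_eq_mul, coeff_one, coeff_zero_X,
    coeff_zero_X_mul, coeff_X_pow_mul', coeff_rescale_mk_one, coeff_rescale_mk_one_sq]
  norm_num

theorem coeff_one_d5Series :
    coeff 1 (d5Series u (rescale (-u ^ 2) (mk 1))) = 2 * u ^ 3 + 3 * u ^ 2 - u - 4 := by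
  simp only [d5Series_eq_smul, map_add, map_sub, coeff_smul, smul_eq_mul, coeff_one, coeff_one_X,
    coeff_succ_X_mul, coeff_X_pow_mul', coeff_rescale_mk_one, coeff_rescale_mk_one_sq]
  norm_num
  ring

theorem coeff_d5Series_of_two_le {n : ℕ} (hn : 2 ≤ n) :
    coeff n (d5Series u (rescale (-u ^ 2) (mk 1))) =
      -u * (((n : R) + 1) * u - ((n : R) - 2)) * (u - 1) * (u + 1) ^ 2 * (-u ^ 2) ^ (n - 2) := by
  obtain ⟨m, rfl⟩ := Nat.exists_eq_add_of_le' hn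
  simp only [d5Series_eq_smul, map_add, map_sub, coeff_smul, smul_eq_mul, coeff_one, coeff_X,
    coeff_succ_X_mul, coeff_X_pow_mul, coeff_rescale_mk_one, coeff_rescale_mk_one_sq,
    Nat.add_sub_cancel, show m + 2 ≠ 1 by omega, if_false]
  push_cast
  ring

end D5Series

/-- **the `D₅` series `Q`.** In `(ℚ[U])⟦y⟧`, the element `1 + y U²` has
constant coefficient `1`, hence is a unit; let `W` be its inverse.  Set
`Q := 4 - y + (1+y)(yU - 3)·W - U(1+y)²·W²`.
Then the coefficient of `y⁰` in `Q` is `1 - U`, the coefficient of `y¹` is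
`2U³ + 3U² - U - 4`, and for every `n ≥ 2` the coefficient of `yⁿ` is
`-U((n+1)U - (n-2))(U-1)(U+1)²(-U²)^{n-2}`. -/
theorem statement3 (W : PowerSeries (Polynomial ℚ))
    (hW : (1 + PowerSeries.C ((Polynomial.X : Polynomial ℚ) ^ 2) *
        PowerSeries.X) * W = 1) :
    letI U : Polynomial ℚ := Polynomial.X
    letI y : PowerSeries (Polynomial ℚ) := PowerSeries.X
    letI Q : PowerSeries (Polynomial ℚ) :=
      4 - y + (1 + y) * (y * PowerSeries.C U - 3) * W
        - PowerSeries.C U * (1 + y) ^ 2 * W ^ 2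
    (PowerSeries.coeff 0 Q = 1 - U) ∧
    (PowerSeries.coeff 1 Q = 2 * U ^ 3 + 3 * U ^ 2 - U - 4) ∧
    (∀ n : ℕ, 2 ≤ n →
      PowerSeries.coeff n Q =
        -U * (((n : Polynomial ℚ) + 1) * U - ((n : Polynomial ℚ) - 2)) * (U - 1)
          * (U + 1) ^ 2 * (-U ^ 2) ^ (n - 2)) := by
  obtain rfl := eq_rescale_mk_one_of_one_add_C_mul_X_mul_eq_one hW
  exact ⟨coeff_zero_d5Series _, coeff_one_d5Series _, fun _ => coeff_d5Series_of_two_le _⟩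
end

section
/- In ℚ[[H,L,y]] define D := (1 + y e^{−H})(1 + y e^{−H−L})³ · (1+y)⁻¹ · ((1 + y e^{−2H−2L})⁻¹)² · [H(H+L)³/((1 − e^{−H})(1 − e^{−H−L})³)] · (1 − e^{−2H−2L})², where the bracketed factor denotes u⁻¹v⁻³ for the units u, v with 1 − e^{−H} = H·u and 1 − e^{−(H+L)} = (H+L)·v. View D = ∑_{k≥0} g_k H^k as an element of A[[H]] with A := ℚ[[L,y]], and define π_*(D) := ∑_{k≥3} (−1)^{k−3}·binom(k−1,2)·g_k·L^{k−3} (a coefficientwise convergent sum in A, the k-th term being divisible by L^{k−3}). Then π_*(D) = 4 − y + (1+y)(yU − 3)(1 + yU²)⁻¹ − U(1+y)²((1 + yU²)⁻¹)², where U := exp(−L) ∈ A. -/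
/-!
The pushforward `π_* f` is the sum of the residues of `f / (H (H + L)³)` at `H = 0` and
`H = -L`. Since `1 - e^{-2(H+L)} = (1 - e^{-(H+L)})(1 + e^{-(H+L)})` is divisible by `H + L`,
`D = (H + L)² W`, and for such `D` only two simple poles remain: `L · π_* D = W(0) - W(-L)`.
At `H = 0` one has `e^{-H} = 1`, and at `H = -L` one has `e^{-(H+L)} = 1` and
`(1 - e^{-H})/H = (e^{L} - 1)/L`, so both values are explicit in `y` and `U = e^{-L}`, and the
theorem reduces to an identity of rational functions in `y` and `U`.

Evaluation at `H = -L`, the `L`-adically convergent sum `∑ₘ fₘ (-L)ᵐ`, is a ring homomorphism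
`A⟦H⟧ → A` because it is characterised by `f = f(-L) + (H + L) g`.
-/

noncomputable section

/-- `A := ℚ⟦L,y⟧`, with `L` and `y` the two variables. -/
abbrev Aq : Type := MvPowerSeries (Fin 2) ℚ

/-- `B := A⟦H⟧ ≅ ℚ⟦H,L,y⟧`. -/
abbrev Bq : Type := PowerSeries Aq

/-- The variable `L`. -/
def Lv : Aq := MvPowerSeries.X 0

/-- The variable `y`. -/
def yv : Aq := MvPowerSeries.X 1

/-- The variable `H`. -/
def Hb : Bq := PowerSeries.X

/-- `L` viewed in `B`. -/
def Lb : Bq := PowerSeries.C (R := Aq) Lv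

/-- `y` viewed in `B`. -/
def yb : Bq := PowerSeries.C (R := Aq) yv

/-- The exponential `exp f = ∑ fⁿ/n!` of `f ∈ A = ℚ⟦L,y⟧` with zero constant
coefficient; coefficientwise the (X-adically convergent) sum is finite, since
`coeff e (f ^ n) = 0` whenever `n` exceeds the total degree of the monomial `e`. -/
def expA (f : Aq) : Aq := fun e =>
  ∑ n ∈ Finset.range (e 0 + e 1 + 1),
    (n.factorial : ℚ)⁻¹ * MvPowerSeries.coeff (R := ℚ) e (f ^ n)

/-- The exponential `exp f = ∑ fⁿ/n!` of `f ∈ B = ℚ⟦H,L,y⟧` with zero constant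
coefficient, computed coefficientwise by a finite sum (the coefficient of
`Hᵏ Lᵃ yᵇ` in `f ^ n` vanishes for `n > k + a + b`). -/
def expB (f : Bq) : Bq :=
  PowerSeries.mk fun k => (fun e =>
    ∑ n ∈ Finset.range (k + e 0 + e 1 + 1),
      (n.factorial : ℚ)⁻¹ * MvPowerSeries.coeff (R := ℚ) e (PowerSeries.coeff (R := Aq) k (f ^ n)) : Aq)

/-- The pushforward `π_*` for the `ℙ³`-bundle `ℙ(𝒪⊕𝓛⊕𝓛⊕𝓛)`: writing
`f = ∑_k g_k Hᵏ` with `g_k ∈ A`, it is `∑_{k≥3} (-1)^{k-3} C(k-1,2) g_k L^{k-3}`,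
a coefficientwise convergent sum in `A` (the `k`-th term is divisible by `L^{k-3}`),
so that the coefficient of `Lᵃ yᵇ` is
`∑_{j=0}^{a} (-1)^j C(j+2,2) · (coefficient of L^{a-j} yᵇ in g_{j+3})`. -/
def pushD5 (f : Bq) : Aq := fun e =>
  ∑ k ∈ Finset.range (e 0 + 1),
    (-1 : ℚ) ^ k * (Nat.choose (k + 2) 2 : ℚ) *
      MvPowerSeries.coeff (R := ℚ) (Finsupp.single 0 (e 0 - k) + Finsupp.single 1 (e 1))
        (PowerSeries.coeff (R := Aq) (k + 3) f)

open PowerSeries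

theorem MvPowerSeries.coeff_X_mul' {σ R : Type*} [Semiring R] (s : σ) (φ : MvPowerSeries σ R)
    (e : σ →₀ ℕ) :
    MvPowerSeries.coeff e (MvPowerSeries.X s * φ)
      = if e s = 0 then 0 else MvPowerSeries.coeff (e - Finsupp.single s 1) φ := by
  classical
  rw [MvPowerSeries.X, MvPowerSeries.coeff_monomial_mul]
  by_cases h : e s = 0 <;> simp [h, Finsupp.single_le_iff, Nat.one_le_iff_ne_zero]

section EvalNegX

variable {σ R : Type*} [CommRing R] (s : σ)

/-- The substitution `H ↦ -X s` in `(MvPowerSeries σ R)⟦H⟧`, i.e. `∑ₘ fₘ (-X s)ᵐ`; this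
`X s`-adically convergent sum has only finitely many terms contributing to each coefficient. -/
def evalNegX (f : PowerSeries (MvPowerSeries σ R)) : MvPowerSeries σ R := fun e =>
  ∑ m ∈ Finset.range (e s + 1),
    (-1) ^ m * MvPowerSeries.coeff (e - Finsupp.single s m) (coeff m f)

theorem coeff_evalNegX (f : PowerSeries (MvPowerSeries σ R)) (e : σ →₀ ℕ) :
    MvPowerSeries.coeff e (evalNegX s f) = ∑ m ∈ Finset.range (e s + 1),
      (-1) ^ m * MvPowerSeries.coeff (e - Finsupp.single s m) (coeff m f) := rfl

theorem evalNegX_eq_constantCoeff_sub (f : PowerSeries (MvPowerSeries σ R)) :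
    evalNegX s f
      = constantCoeff f - MvPowerSeries.X s * evalNegX s (mk fun k => coeff (k + 1) f) := by
  ext e
  rw [map_sub, MvPowerSeries.coeff_X_mul', coeff_evalNegX, Finset.sum_range_succ']
  rcases hs : e s with _ | n
  · simp
  · simp only [coeff_evalNegX, Finsupp.tsub_apply, Finsupp.single_eq_same, hs,
      Nat.add_sub_cancel, pow_zero, one_mul, Finsupp.single_zero, tsub_zero,
      coeff_zero_eq_constantCoeff, coeff_mk, tsub_tsub, ← Finsupp.single_add, pow_succ]
    rw [if_neg n.succ_ne_zero, sub_eq_add_neg, add_comm, ← Finset.sum_neg_distrib]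
    congr 1
    refine Finset.sum_congr rfl fun m _ => ?_
    rw [add_comm 1 m]
    ring

theorem exists_eq_C_evalNegX_add_mul (f : PowerSeries (MvPowerSeries σ R)) :
    ∃ g, f = C (evalNegX s f) + (X + C (MvPowerSeries.X s)) * g := by
  set tail : ℕ → PowerSeries (MvPowerSeries σ R) := fun k => mk fun m => coeff (m + k) f
  have htail (k : ℕ) : evalNegX s (tail k)
      = coeff k f - MvPowerSeries.X s * evalNegX s (tail (k + 1)) := by
    rw [evalNegX_eq_constantCoeff_sub]
    simp [tail, add_assoc, add_comm 1]
  refine ⟨mk fun k => evalNegX s (tail (k + 1)), ?_⟩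
  ext1 k
  rcases k with _ | k
  · rw [evalNegX_eq_constantCoeff_sub s f]
    simp [add_mul, coeff_zero_eq_constantCoeff, tail]
  · simp [add_mul, coeff_succ_X_mul, htail (k + 1)]

theorem eq_zero_of_C_eq_mul {x : MvPowerSeries σ R} {g : PowerSeries (MvPowerSeries σ R)}
    (h : C x = (X + C (MvPowerSeries.X s)) * g) : x = 0 := by
  have hx : x = MvPowerSeries.X s * coeff 0 g := by
    simpa [add_mul, coeff_zero_eq_constantCoeff] using congrArg constantCoeff h
  have hg (k : ℕ) : coeff k g = -(MvPowerSeries.X s * coeff (k + 1) g) := by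
    have := congrArg (coeff (k + 1)) h
    simp only [coeff_C, add_mul, map_add, coeff_succ_X_mul, coeff_C_mul, k.succ_ne_zero,
      if_false] at this
    linear_combination -this
  have hdvd (n : ℕ) : ∀ k, MvPowerSeries.X s ^ n ∣ coeff k g := by
    induction n with
    | zero => simp
    | succ n ih =>
      intro k
      rw [hg k, pow_succ']
      exact dvd_neg.mpr (mul_dvd_mul_left _ (ih (k + 1)))
  ext e
  have : MvPowerSeries.X s ^ (e s + 1) ∣ x := by
    rw [hx, pow_succ']
    exact mul_dvd_mul_left _ (hdvd _ 0)
  exact MvPowerSeries.X_pow_dvd_iff.mp this e (Nat.lt_succ_self _)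

theorem evalNegX_eq_of_eq_C_add_mul {f : PowerSeries (MvPowerSeries σ R)}
    {a : MvPowerSeries σ R} {g : PowerSeries (MvPowerSeries σ R)}
    (h : f = C a + (X + C (MvPowerSeries.X s)) * g) : evalNegX s f = a := by
  obtain ⟨g', hg'⟩ := exists_eq_C_evalNegX_add_mul s f
  rw [← sub_eq_zero]
  refine eq_zero_of_C_eq_mul s (g := g - g') ?_
  rw [map_sub]
  linear_combination hg'.symm.trans h

@[simp] theorem evalNegX_C (a : MvPowerSeries σ R) : evalNegX s (C a) = a :=
  evalNegX_eq_of_eq_C_add_mul s (g := 0) (by simp)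

@[simp] theorem evalNegX_X :
    evalNegX s (X : PowerSeries (MvPowerSeries σ R)) = -MvPowerSeries.X s :=
  evalNegX_eq_of_eq_C_add_mul s (g := 1) (by simp)

def evalNegXRingHom : PowerSeries (MvPowerSeries σ R) →+* MvPowerSeries σ R where
  toFun := evalNegX s
  map_one' := by simpa using evalNegX_C s (1 : MvPowerSeries σ R)
  map_zero' := by simpa using evalNegX_C s (0 : MvPowerSeries σ R)
  map_add' f f' := by
    obtain ⟨g, hg⟩ := exists_eq_C_evalNegX_add_mul s f
    obtain ⟨g', hg'⟩ := exists_eq_C_evalNegX_add_mul s f'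
    refine evalNegX_eq_of_eq_C_add_mul s (g := g + g') ?_
    rw [map_add]
    linear_combination hg + hg'
  map_mul' f f' := by
    obtain ⟨g, hg⟩ := exists_eq_C_evalNegX_add_mul s f
    obtain ⟨g', hg'⟩ := exists_eq_C_evalNegX_add_mul s f'
    refine evalNegX_eq_of_eq_C_add_mul s (g := C (evalNegX s f) * g' + g * f') ?_
    rw [map_mul]
    linear_combination f' * hg + C (evalNegX s f) * hg'

@[simp] theorem evalNegX_add (f g : PowerSeries (MvPowerSeries σ R)) :
    evalNegX s (f + g) = evalNegX s f + evalNegX s g := map_add (evalNegXRingHom s) f g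

@[simp] theorem evalNegX_mul (f g : PowerSeries (MvPowerSeries σ R)) :
    evalNegX s (f * g) = evalNegX s f * evalNegX s g := map_mul (evalNegXRingHom s) f g

@[simp] theorem evalNegX_sub (f g : PowerSeries (MvPowerSeries σ R)) :
    evalNegX s (f - g) = evalNegX s f - evalNegX s g := map_sub (evalNegXRingHom s) f g

@[simp] theorem evalNegX_pow (f : PowerSeries (MvPowerSeries σ R)) (n : ℕ) :
    evalNegX s (f ^ n) = evalNegX s f ^ n := map_pow (evalNegXRingHom s) f n

@[simp] theorem evalNegX_one : evalNegX s (1 : PowerSeries (MvPowerSeries σ R)) = 1 :=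
  map_one (evalNegXRingHom s)

/-- The pushforward along the `ℙⁿ⁺¹`-bundle `ℙ(𝒪 ⊕ 𝓛^{⊕(n+1)})` with `c₁(𝓛) = X s`, written in
the hyperplane class `H`: `π_* Hᵏ⁺ⁿ⁺¹ = (-X s)ᵏ C(k+n, n)`, the Segre classes of the bundle. -/
def pushforward (n : ℕ) (f : PowerSeries (MvPowerSeries σ R)) : MvPowerSeries σ R :=
  evalNegX s (mk fun k => ((k + n).choose n : MvPowerSeries σ R) * coeff (k + n + 1) f)

theorem pushforward_add (n : ℕ) (f g : PowerSeries (MvPowerSeries σ R)) :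
    pushforward s n (f + g) = pushforward s n f + pushforward s n g := by
  rw [pushforward, pushforward, pushforward, ← evalNegX_add]
  congr 1
  ext k
  simp [mul_add]

theorem coeff_succ_X_add_C_mul (g : PowerSeries (MvPowerSeries σ R)) (k : ℕ) :
    coeff (k + 1) ((X + C (MvPowerSeries.X s)) * g)
      = coeff k g + MvPowerSeries.X s * coeff (k + 1) g := by
  simp [add_mul, coeff_succ_X_mul]

theorem pushforward_zero_X_add_C_mul (g : PowerSeries (MvPowerSeries σ R)) :
    pushforward s 0 ((X + C (MvPowerSeries.X s)) * g) = constantCoeff g := by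
  have : (mk fun k => ((k + 0).choose 0 : MvPowerSeries σ R)
        * coeff (k + 0 + 1) ((X + C (MvPowerSeries.X s)) * g))
      = g + C (MvPowerSeries.X s) * mk fun k => coeff (k + 1) g := by
    ext k
    simp [coeff_succ_X_add_C_mul]
  rw [pushforward, this, evalNegX_add, evalNegX_mul, evalNegX_C,
    evalNegX_eq_constantCoeff_sub s g]
  ring

theorem pushforward_succ_X_add_C_mul (n : ℕ) (g : PowerSeries (MvPowerSeries σ R)) :
    pushforward s (n + 1) ((X + C (MvPowerSeries.X s)) * g) = pushforward s n g := by
  set d : PowerSeries (MvPowerSeries σ R) :=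
    mk fun k => ((k + n).choose (n + 1) : MvPowerSeries σ R) * coeff (k + n + 1) g
  -- `d₀ = C(n, n+1) g_{n+1} = 0`
  have hd : evalNegX s d = -(MvPowerSeries.X s * evalNegX s (mk fun k => coeff (k + 1) d)) := by
    simp [evalNegX_eq_constantCoeff_sub s d, d]
  have hpascal (k : ℕ) : ((k + n + 1).choose (n + 1) : MvPowerSeries σ R)
      = (k + n).choose n + (k + n).choose (n + 1) := by
    rw [Nat.choose_succ_succ', Nat.cast_add]
  have : (mk fun k => ((k + (n + 1)).choose (n + 1) : MvPowerSeries σ R)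
        * coeff (k + (n + 1) + 1) ((X + C (MvPowerSeries.X s)) * g))
      = (mk fun k => ((k + n).choose n : MvPowerSeries σ R) * coeff (k + n + 1) g)
        + d + C (MvPowerSeries.X s) * mk fun k => coeff (k + 1) d := by
    refine PowerSeries.ext fun k => ?_
    simp only [coeff_mk, map_add, coeff_C_mul, d, ← add_assoc, coeff_succ_X_add_C_mul,
      show k + 1 + n = k + n + 1 by ring, hpascal]
    ring
  rw [pushforward, pushforward, this, evalNegX_add, evalNegX_add, evalNegX_mul, evalNegX_C, hd]
  ring

theorem pushforward_add_X_add_C_pow_mul (n m : ℕ) (g : PowerSeries (MvPowerSeries σ R)) :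
    pushforward s (n + m) ((X + C (MvPowerSeries.X s)) ^ m * g) = pushforward s n g := by
  induction m with
  | zero => simp
  | succ m ih => rw [pow_succ', mul_assoc, ← add_assoc, pushforward_succ_X_add_C_mul, ih]

theorem pushforward_C (n : ℕ) (a : MvPowerSeries σ R) : pushforward s n (C a) = 0 := by
  have : (mk fun k => ((k + n).choose n : MvPowerSeries σ R) * coeff (k + n + 1) (C a)) = 0 := by
    ext1 k
    simp
  rw [pushforward, this, ← map_zero C, evalNegX_C]

theorem X_mul_pushforward_X_add_C_pow_mul (n : ℕ) (W : PowerSeries (MvPowerSeries σ R)) :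
    MvPowerSeries.X s * pushforward s n ((X + C (MvPowerSeries.X s)) ^ n * W)
      = constantCoeff W - evalNegX s W := by
  obtain ⟨g, hg⟩ := exists_eq_C_evalNegX_add_mul s W
  have hW := congrArg constantCoeff hg
  simp only [map_add, map_mul, constantCoeff_C, constantCoeff_X, zero_add] at hW
  have hpush (f : PowerSeries (MvPowerSeries σ R)) :
      pushforward s n ((X + C (MvPowerSeries.X s)) ^ n * f) = pushforward s 0 f := by
    simpa using pushforward_add_X_add_C_pow_mul s 0 n f
  rw [hW, add_sub_cancel_left, hpush]
  conv_lhs => rw [hg]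
  rw [pushforward_add, pushforward_C, pushforward_zero_X_add_C_mul, zero_add]

end EvalNegX

section Exponentials

variable {A : Type*} [CommSemiring A]

theorem PowerSeries.coeff_X_add_C_pow (a : A) (n k : ℕ) :
    coeff k ((X + C a) ^ n) = a ^ (n - k) * n.choose k := by
  have : ((X + C a) ^ n : PowerSeries A) = ((Polynomial.X + Polynomial.C a) ^ n : Polynomial A) :=
    by simp
  rw [this, Polynomial.coeff_coe, Polynomial.coeff_X_add_C_pow]

theorem PowerSeries.derivative_rescale (f : PowerSeries A) (a : A) :
    d⁄dX A (rescale a f) = C a * rescale a (d⁄dX A f) := by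
  ext n
  simp only [coeff_derivative, coeff_rescale, coeff_C_mul]
  ring

theorem PowerSeries.derivative_rescale_exp {A : Type*} [CommRing A] [Algebra ℚ A] (a : A) :
    d⁄dX A (rescale a (exp A)) = C a * rescale a (exp A) := by
  rw [derivative_rescale, derivative_exp]

end Exponentials

theorem finTwo_sub_single_zero (e : Fin 2 →₀ ℕ) (m : ℕ) :
    e - Finsupp.single 0 m = Finsupp.single 0 (e 0 - m) + Finsupp.single 1 (e 1) := by
  ext i
  fin_cases i <;> simp

theorem finTwo_eq_single_zero_iff (e : Fin 2 →₀ ℕ) (m : ℕ) :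
    e = Finsupp.single 0 m ↔ e 0 = m ∧ e 1 = 0 := by
  constructor
  · rintro rfl
    simp
  · rintro ⟨h0, h1⟩
    ext i
    fin_cases i <;> simp [h0, h1]

theorem coeff_expA (f : Aq) (e : Fin 2 →₀ ℕ) :
    MvPowerSeries.coeff e (expA f) = ∑ n ∈ Finset.range (e 0 + e 1 + 1),
      ((n.factorial : ℚ))⁻¹ * MvPowerSeries.coeff e (f ^ n) := rfl

theorem coeff_expA_smul_Lv (c : ℚ) (e : Fin 2 →₀ ℕ) :
    MvPowerSeries.coeff e (expA (c • Lv)) = if e 1 = 0 then c ^ e 0 / (e 0).factorial else 0 := by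
  have hterm (n : ℕ) : MvPowerSeries.coeff e ((c • Lv) ^ n)
      = if e 0 = n ∧ e 1 = 0 then c ^ n else 0 := by
    simp [smul_pow, Lv, MvPowerSeries.coeff_X_pow, finTwo_eq_single_zero_iff]
  rw [coeff_expA]
  simp only [hterm, mul_ite, mul_zero]
  by_cases h1 : e 1 = 0
  · simp [h1, Finset.sum_ite_eq, div_eq_inv_mul]
  · simp [h1]

theorem algebraMap_Aq_apply (q : ℚ) : algebraMap ℚ Aq q = MvPowerSeries.C q := rfl

theorem evalNegX_rescale_exp (c : ℚ) :
    evalNegX 0 (rescale (algebraMap ℚ Aq c) (exp Aq)) = expA ((-c) • Lv) := by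
  ext e
  rw [coeff_evalNegX, coeff_expA_smul_Lv]
  simp only [coeff_rescale, coeff_exp, ← map_pow, ← map_mul, algebraMap_Aq_apply,
    MvPowerSeries.coeff_C, finTwo_sub_single_zero]
  by_cases h1 : e 1 = 0
  · rw [if_pos h1, Finset.sum_eq_single (e 0)]
    · simp only [tsub_self, Finsupp.single_zero, h1, add_zero, if_true]
      rw [neg_pow]
      ring
    · intro m hm hne
      rw [Finset.mem_range] at hm
      refine mul_eq_zero_of_right _ (if_neg fun h => hne ?_)
      rw [add_eq_zero, Finsupp.single_eq_zero, Finsupp.single_eq_zero] at h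
      omega
    · simp
  · rw [if_neg h1]
    exact Finset.sum_eq_zero fun m _ => by simp [h1]

-- `e^{aH} e^{bH} = e^{(a+b)H}`, transported along the ring map `H ↦ -L`
theorem expA_add_smul_Lv (c c' : ℚ) : expA ((c + c') • Lv) = expA (c • Lv) * expA (c' • Lv) := by
  rw [← neg_neg c, ← neg_neg c', ← neg_add, ← evalNegX_rescale_exp, ← evalNegX_rescale_exp,
    ← evalNegX_rescale_exp, ← evalNegX_mul, map_add, exp_mul_exp_eq_exp_add]

theorem coeff_coeff_expB (f : Bq) (k : ℕ) (e : Fin 2 →₀ ℕ) :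
    MvPowerSeries.coeff e (coeff k (expB f)) = ∑ n ∈ Finset.range (k + e 0 + e 1 + 1),
      ((n.factorial : ℚ))⁻¹ * MvPowerSeries.coeff e (coeff k (f ^ n)) := by
  rw [expB]
  erw [coeff_mk]
  rfl

theorem expB_smul_Hb (c : ℚ) : expB (c • Hb) = rescale (algebraMap ℚ Aq c) (exp Aq) := by
  ext k e
  rw [coeff_coeff_expB]
  simp [smul_pow, Hb, coeff_X_pow, algebraMap_Aq_apply, ← map_pow, MvPowerSeries.coeff_C,
    apply_ite (MvPowerSeries.coeff e), MvPowerSeries.coeff_one, Finset.sum_ite_eq,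
    show k ≤ k + e 0 + e 1 by omega, mul_comm]

theorem expB_smul_Hb_add_Lb (c : ℚ) :
    expB (c • (Hb + Lb)) = rescale (algebraMap ℚ Aq c) (exp Aq) * C (expA (c • Lv)) := by
  ext k e
  have hterm (n : ℕ) : MvPowerSeries.coeff e (coeff k ((c • (Hb + Lb)) ^ n))
      = if n = k + e 0 ∧ e 1 = 0 then c ^ n * n.choose k else 0 := by
    rw [smul_pow, coeff_smul, show Hb + Lb = X + C Lv from rfl, coeff_X_add_C_pow, Lv,
      MvPowerSeries.coeff_smul, ← map_natCast (MvPowerSeries.C (σ := Fin 2) (R := ℚ)), MvPowerSeries.coeff_mul_C,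
      MvPowerSeries.coeff_X_pow]
    simp only [finTwo_eq_single_zero_iff]
    by_cases hc : n = k + e 0 ∧ e 1 = 0
    · rw [if_pos (by omega), if_pos hc, one_mul]
    · rcases lt_or_ge n k with h | h
      · simp [Nat.choose_eq_zero_of_lt h]
      · rw [if_neg (by omega), if_neg hc, zero_mul, mul_zero]
  rw [coeff_coeff_expB, coeff_mul_C]
  simp only [hterm, coeff_rescale, coeff_exp, algebraMap_Aq_apply, ← map_pow, ← map_mul,
    MvPowerSeries.coeff_C_mul, coeff_expA_smul_Lv]
  by_cases h1 : e 1 = 0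
  · have h := Nat.choose_mul_factorial_mul_factorial (Nat.le_add_right k (e 0))
    rw [Nat.add_sub_cancel_left] at h
    have hf : ((k + e 0).choose k : ℚ) * k.factorial * (e 0).factorial = (k + e 0).factorial := by
      exact_mod_cast h
    have hc : ((k + e 0).choose k : ℚ) ≠ 0 :=
      Nat.cast_ne_zero.mpr (Nat.choose_pos (Nat.le_add_right _ _)).ne'
    simp only [h1, add_zero, and_true, mul_ite, mul_zero, Finset.sum_ite_eq', Finset.mem_range,
      lt_add_one, if_true, ← hf]
    field_simp
    ring
  · simp [h1]

theorem expB_neg_Hb : expB (-Hb) = rescale (-1) (exp Aq) := by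
  rw [← neg_one_smul ℚ Hb, expB_smul_Hb, map_neg, map_one]

theorem expB_neg_Hb_add_Lb : expB (-(Hb + Lb)) = expB (-Hb) * C (expA (-Lv)) := by
  rw [← neg_one_smul ℚ (Hb + Lb), ← neg_one_smul ℚ Lv, expB_smul_Hb_add_Lb, expB_neg_Hb, map_neg,
    map_one]

theorem expB_neg_two_mul : expB (-(2 * Hb + 2 * Lb)) = expB (-(Hb + Lb)) ^ 2 := by
  have h : -(2 * Hb + 2 * Lb) = (-1 + -1 : ℚ) • (Hb + Lb) := by
    rw [add_smul, neg_one_smul]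
    ring
  rw [h, expB_smul_Hb_add_Lb, expA_add_smul_Lv, map_add, ← exp_mul_exp_eq_exp_add, map_mul,
    ← neg_one_smul ℚ (Hb + Lb), expB_smul_Hb_add_Lb]
  ring

theorem constantCoeff_expB_neg_Hb : constantCoeff (expB (-Hb)) = 1 := by
  simp [expB_neg_Hb, ← coeff_zero_eq_constantCoeff_apply]

theorem coeff_one_expB_neg_Hb : coeff 1 (expB (-Hb)) = -1 := by
  simp [expB_neg_Hb]

theorem derivative_expB_neg_Hb_add_Lb : d⁄dX Aq (expB (-(Hb + Lb))) = -expB (-(Hb + Lb)) := by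
  rw [expB_neg_Hb_add_Lb, expB_neg_Hb, Derivation.leibniz, derivative_C, derivative_rescale_exp]
  simp [mul_comm]

theorem pushD5_eq_pushforward (f : Bq) : pushD5 f = pushforward 0 2 f := by
  ext e
  rw [pushforward, coeff_evalNegX]
  refine Finset.sum_congr (s₁ := Finset.range (e 0 + 1)) rfl fun k _ => ?_
  rw [coeff_mk, finTwo_sub_single_zero, ← map_natCast (MvPowerSeries.C (σ := Fin 2) (R := ℚ)),
    MvPowerSeries.coeff_C_mul]
  ring

theorem Lv_ne_zero : Lv ≠ 0 := by
  intro h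
  simpa [Lv, MvPowerSeries.coeff_X] using congrArg (MvPowerSeries.coeff (Finsupp.single 0 1)) h

@[simp] theorem constantCoeff_Hb : constantCoeff Hb = 0 := constantCoeff_X
@[simp] theorem constantCoeff_Lb : constantCoeff Lb = Lv := constantCoeff_C _
@[simp] theorem constantCoeff_yb : constantCoeff yb = yv := constantCoeff_C _
@[simp] theorem evalNegX_Hb : evalNegX 0 Hb = -Lv := evalNegX_X 0
@[simp] theorem evalNegX_Lb : evalNegX 0 Lb = Lv := evalNegX_C 0 _
@[simp] theorem evalNegX_yb : evalNegX 0 yb = yv := evalNegX_C 0 _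

@[simp] theorem derivative_Hb : d⁄dX Aq Hb = 1 := derivative_X
@[simp] theorem derivative_Lb : d⁄dX Aq Lb = 0 := derivative_C

theorem Lv_mul_pushD5 (W : Bq) :
    Lv * pushD5 ((Hb + Lb) ^ 2 * W) = constantCoeff W - evalNegX 0 W := by
  rw [pushD5_eq_pushforward]
  exact X_mul_pushforward_X_add_C_pow_mul 0 2 W

theorem constantCoeff_expB_neg_Hb_add_Lb : constantCoeff (expB (-(Hb + Lb))) = expA (-Lv) := by
  rw [expB_neg_Hb_add_Lb, map_mul, constantCoeff_expB_neg_Hb, constantCoeff_C, one_mul]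

-- `e^{-(H+L)}` at `H = -L` is `e^{L} e^{-L} = e^{0 L}`
theorem evalNegX_expB_neg_Hb_add_Lb : evalNegX 0 (expB (-(Hb + Lb))) = 1 := by
  have h1 := evalNegX_rescale_exp (-1)
  have h0 := evalNegX_rescale_exp 0
  have h := expA_add_smul_Lv 1 (-1)
  rw [map_neg, map_one, neg_neg, one_smul] at h1
  rw [map_zero, rescale_zero, neg_zero, zero_smul] at h0
  rw [add_neg_cancel, zero_smul, one_smul, neg_one_smul] at h
  rw [expB_neg_Hb_add_Lb, expB_neg_Hb, evalNegX_mul, evalNegX_C, h1, ← h, ← h0]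
  simp

theorem evalNegX_expB_neg_Hb_mul_expA : evalNegX 0 (expB (-Hb)) * expA (-Lv) = 1 := by
  simpa only [expB_neg_Hb_add_Lb, evalNegX_mul, evalNegX_C] using evalNegX_expB_neg_Hb_add_Lb

section D5

variable {u uinv v vinv pinv winv : Bq} {qinv : Aq}

def reducedD (uinv vinv pinv winv : Bq) : Bq :=
  uinv * vinv * (1 + yb * expB (-Hb)) * (1 + yb * expB (-(Hb + Lb))) ^ 3 * pinv * winv ^ 2 *
    (1 + expB (-(Hb + Lb))) ^ 2

theorem D_eq_sq_mul_reducedD (hv : 1 - expB (-(Hb + Lb)) = (Hb + Lb) * v) (hv1 : v * vinv = 1) :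
    (1 + yb * expB (-Hb)) * (1 + yb * expB (-(Hb + Lb))) ^ 3 * pinv * winv ^ 2 *
        (uinv * vinv ^ 3) * (1 - expB (-(2 * Hb + 2 * Lb))) ^ 2
      = (Hb + Lb) ^ 2 * reducedD uinv vinv pinv winv := by
  set z := expB (-(Hb + Lb))
  set K := (1 + yb * expB (-Hb)) * (1 + yb * z) ^ 3 * pinv * winv ^ 2 * uinv
  rw [expB_neg_two_mul, reducedD]
  -- `1 - z² = (1 - z)(1 + z) = (H + L) v (1 + z)`
  linear_combination K * vinv ^ 3 * (1 + z) ^ 2 * (1 - z + (Hb + Lb) * v) * hv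
    + K * (Hb + Lb) ^ 2 * (1 + z) ^ 2 * vinv * (v * vinv + 1) * hv1

theorem constantCoeff_eq_one_of_one_sub_expB_eq (hu : 1 - expB (-Hb) = Hb * u) :
    constantCoeff u = 1 := by
  have h := congrArg (coeff 1) hu
  rw [map_sub, coeff_one_expB_neg_Hb] at h
  simpa [Hb, coeff_one] using h.symm

theorem Lv_eq_constantCoeff_mul (hv : 1 - expB (-(Hb + Lb)) = (Hb + Lb) * v) (hv1 : v * vinv = 1) :
    Lv = constantCoeff vinv * (1 - expA (-Lv)) := by
  have h := congrArg constantCoeff hv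
  have h1 := congrArg constantCoeff hv1
  simp only [map_sub, map_one, map_mul, map_add, constantCoeff_expB_neg_Hb_add_Lb,
    constantCoeff_Hb, constantCoeff_Lb, zero_add] at h h1
  linear_combination -constantCoeff vinv * h - Lv * h1

theorem evalNegX_eq_one_of_one_sub_expB_eq (hv : 1 - expB (-(Hb + Lb)) = (Hb + Lb) * v) :
    evalNegX 0 v = 1 := by
  -- differentiate `1 - e^{-(H+L)} = (H + L) v` and set `H = -L`
  have h := congrArg (fun f => evalNegX 0 (d⁄dX Aq f)) hv
  simp only [map_sub, Derivation.map_one_eq_zero, derivative_expB_neg_Hb_add_Lb,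
    Derivation.leibniz, map_add, derivative_Hb, derivative_Lb, smul_eq_mul, mul_one,
    add_zero, zero_sub, neg_neg, evalNegX_expB_neg_Hb_add_Lb, evalNegX_add, evalNegX_mul,
    evalNegX_Hb, evalNegX_Lb, neg_add_cancel, zero_mul, zero_add] at h
  exact h.symm

theorem constantCoeff_reducedD (hu : 1 - expB (-Hb) = Hb * u) (hu1 : u * uinv = 1)
    (hp : (1 + yb) * pinv = 1) (hw : (1 + yb * expB (-(2 * Hb + 2 * Lb))) * winv = 1)
    (hq : (1 + yv * (expA (-Lv)) ^ 2) * qinv = 1) :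
    constantCoeff (reducedD uinv vinv pinv winv)
      = constantCoeff vinv * (1 + yv * expA (-Lv)) ^ 3 * qinv ^ 2 * (1 + expA (-Lv)) ^ 2 := by
  have huinv : constantCoeff uinv = 1 := by
    simpa [constantCoeff_eq_one_of_one_sub_expB_eq hu] using congrArg constantCoeff hu1
  have hp0 : (1 + yv) * constantCoeff pinv = 1 := by simpa using congrArg constantCoeff hp
  have hw0 : constantCoeff winv = qinv := by
    have h := congrArg constantCoeff hw
    rw [expB_neg_two_mul] at h
    simp only [map_mul, map_add, map_one, map_pow, constantCoeff_yb,
      constantCoeff_expB_neg_Hb_add_Lb] at h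
    rw [mul_comm] at h
    exact left_inv_eq_right_inv h hq
  simp only [reducedD, map_mul, map_add, map_pow, map_one, huinv, hw0, constantCoeff_yb,
    constantCoeff_expB_neg_Hb, constantCoeff_expB_neg_Hb_add_Lb]
  linear_combination constantCoeff vinv * (1 + yv * expA (-Lv)) ^ 3 * qinv ^ 2
    * (1 + expA (-Lv)) ^ 2 * hp0

-- `u(-L) = (e^{L} - 1)/L`, so `uinv(-L) = L e^{-L}/(1 - e^{-L})`
theorem evalNegX_uinv (hu : 1 - expB (-Hb) = Hb * u) (hu1 : u * uinv = 1)
    (hv : 1 - expB (-(Hb + Lb)) = (Hb + Lb) * v) (hv1 : v * vinv = 1) :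
    evalNegX 0 uinv = expA (-Lv) * constantCoeff vinv := by
  have hu' := congrArg (evalNegX 0) hu
  have hu1' := congrArg (evalNegX 0) hu1
  simp only [evalNegX_sub, evalNegX_one, evalNegX_mul, evalNegX_Hb] at hu' hu1'
  have huU : expA (-Lv) * constantCoeff vinv * evalNegX 0 u = 1 := by
    refine (mul_right_inj' Lv_ne_zero).mp ?_
    linear_combination expA (-Lv) * constantCoeff vinv * hu'
      + constantCoeff vinv * evalNegX_expB_neg_Hb_mul_expA - Lv_eq_constantCoeff_mul hv hv1
  linear_combination -evalNegX 0 uinv * huU + expA (-Lv) * constantCoeff vinv * hu1'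

theorem evalNegX_reducedD (hu : 1 - expB (-Hb) = Hb * u) (hu1 : u * uinv = 1)
    (hv : 1 - expB (-(Hb + Lb)) = (Hb + Lb) * v) (hv1 : v * vinv = 1)
    (hp : (1 + yb) * pinv = 1) (hw : (1 + yb * expB (-(2 * Hb + 2 * Lb))) * winv = 1) :
    evalNegX 0 (reducedD uinv vinv pinv winv) = 4 * constantCoeff vinv * (expA (-Lv) + yv) := by
  set U := expA (-Lv)
  set c := constantCoeff vinv
  have hz := evalNegX_expB_neg_Hb_add_Lb
  have hvinv : evalNegX 0 vinv = 1 := by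
    simpa [evalNegX_eq_one_of_one_sub_expB_eq hv] using congrArg (evalNegX 0) hv1
  have hpL : (1 + yv) * evalNegX 0 pinv = 1 := by simpa using congrArg (evalNegX 0) hp
  have hwL : (1 + yv) * evalNegX 0 winv = 1 := by
    have h := congrArg (evalNegX 0) hw
    rwa [expB_neg_two_mul, evalNegX_mul, evalNegX_add, evalNegX_mul, evalNegX_pow, hz, evalNegX_one,
      evalNegX_yb, one_pow, mul_one] at h
  have huinv := evalNegX_uinv hu hu1 hv hv1
  simp only [reducedD, evalNegX_mul, evalNegX_add, evalNegX_pow, evalNegX_one, evalNegX_yb, huinv,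
    hvinv, hz]
  linear_combination 4 * U * c * (1 + yv * evalNegX 0 (expB (-Hb)))
      * (((1 + yv) * evalNegX 0 winv) ^ 2 * hpL + ((1 + yv) * evalNegX 0 winv + 1) * hwL)
    + 4 * c * yv * evalNegX_expB_neg_Hb_mul_expA

end D5

/-- **the `D₅` pushforward computation `π_*(D) = Q`.**
In `ℚ⟦H,L,y⟧` let
`D := (1 + y e^{-H})(1 + y e^{-H-L})³ (1+y)⁻¹ ((1 + y e^{-2H-2L})⁻¹)²
      · [H(H+L)³/((1-e^{-H})(1-e^{-H-L})³)] · (1 - e^{-2H-2L})²`,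
where the bracketed factor is `u⁻¹ v⁻³` for the units `u, v` with
`1 - e^{-H} = H·u` and `1 - e^{-(H+L)} = (H+L)·v`.  Then
`π_*(D) = 4 - y + (1+y)(yU-3)(1+yU²)⁻¹ - U(1+y)²((1+yU²)⁻¹)²` where `U = exp(-L)`.
All inverses are specified by explicit unit equations. -/
theorem statement8 (u uinv v vinv pinv winv : Bq) (qinv : Aq)
    (hu : 1 - expB (-Hb) = Hb * u)
    (hu1 : u * uinv = 1)
    (hv : 1 - expB (-(Hb + Lb)) = (Hb + Lb) * v)
    (hv1 : v * vinv = 1)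
    (hp : (1 + yb) * pinv = 1)
    (hw : (1 + yb * expB (-(2 * Hb + 2 * Lb))) * winv = 1)
    (hq : (1 + yv * (expA (-Lv)) ^ 2) * qinv = 1) :
    letI D : Bq :=
      (1 + yb * expB (-Hb)) * (1 + yb * expB (-(Hb + Lb))) ^ 3 * pinv * winv ^ 2 *
        (uinv * vinv ^ 3) * (1 - expB (-(2 * Hb + 2 * Lb))) ^ 2
    letI U : Aq := expA (-Lv)
    pushD5 D =
      4 - yv + (1 + yv) * (yv * U - 3) * qinv - U * (1 + yv) ^ 2 * qinv ^ 2 := by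
  rw [D_eq_sq_mul_reducedD hv hv1]
  refine mul_left_cancel₀ Lv_ne_zero ?_
  rw [Lv_mul_pushD5, constantCoeff_reducedD hu hu1 hp hw hq,
    evalNegX_reducedD hu hu1 hv hv1 hp hw]
  set U := expA (-Lv)
  -- `(1 + yU)³(1 + U)² / (1 + yU²)² - 4(U + y) = (1 - U) Q`, `Q` the right-hand side
  linear_combination
    -(4 - yv + (1 + yv) * (yv * U - 3) * qinv - U * (1 + yv) ^ 2 * qinv ^ 2)
      * Lv_eq_constantCoeff_mul hv hv1
    + constantCoeff vinv * ((1 - U) * (1 + yv) * (yv * U - 3) * qinv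
      + (4 * (U + yv) + (1 - U) * (4 - yv)) * ((1 + yv * U ^ 2) * qinv + 1)) * hq

end
end
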